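/- For $n \geq 3$ and $q \geq 3$, the phase-rotation graph $G_{pr}(\mathbb{F}_q^n)$ is not distance-regular: with $r = \lceil n/2 \rceil$ and vertices $x = (1,\ldots,1,a,0,\ldots,0)$ (with $r-1$ ones and $a \in \mathbb{F}_q^* \setminus \{1\}$) and $y = (1,\ldots,1,0,\ldots,0)$ (with $r$ ones), both at phase-rotation distance $r$ from $0$, the intersection numbers $c_r(x,0)$ and $c_r(y,0)$ differ when $n$ is odd, and $a_r(x,0)$ and $a_r(y,0)$ differ when $n$ is even. -/

import Mathlib

/-- The phase-rotation distance graph on `𝔽_qⁿ`: `x ~ y` iff `y - x = c • v` for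
some nonzero scalar `c` and `v` a standard basis vector or the all-ones vector. -/
def phaseRotationGraph (F : Type*) [Field F] (n : ℕ) (hn : 1 ≤ n) :
    SimpleGraph (Fin n → F) where
  Adj x y := ∃ c : F, c ≠ 0 ∧
    ((∃ i : Fin n, y - x = c • (Pi.single i 1 : Fin n → F)) ∨ y - x = c • (fun _ => (1 : F)))
  symm := by
    constructor
    rintro x y ⟨c, hc, h⟩
    refine ⟨-c, neg_ne_zero.mpr hc, ?_⟩
    rcases h with ⟨i, hi⟩ | h
    · exact Or.inl ⟨i, by rw [neg_smul, ← hi, neg_sub]⟩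
    · exact Or.inr (by rw [neg_smul, ← h, neg_sub])
  loopless := by
    constructor
    rintro x ⟨c, hc, h⟩
    rcases h with ⟨i, hi⟩ | h
    · rw [sub_self] at hi
      have h2 := congrFun hi.symm i
      rw [Pi.smul_apply, Pi.single_eq_same, smul_eq_mul, mul_one] at h2
      exact hc h2
    · rw [sub_self] at h
      have h2 := congrFun h.symm ⟨0, hn⟩
      rw [Pi.smul_apply, smul_eq_mul, mul_one] at h2
      exact hc h2

open Finset

open scoped Classical

section Adj

set_option linter.unusedSectionVars false

variable {F : Type*} [Field F] {n : ℕ} (hn : 1 ≤ n)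

lemma adj_iff (u w : Fin n → F) :
    (phaseRotationGraph F n hn).Adj u w ↔
      ((∃ j : Fin n, w j ≠ u j ∧ w = Function.update u j (w j)) ∨
       (∃ c : F, c ≠ 0 ∧ w = fun i => u i + c)) := by
  constructor
  · rintro ⟨c, hc, ⟨i, hi⟩ | h1⟩
    · left
      refine ⟨i, ?_, ?_⟩
      · have h2 := congrFun hi i
        simp only [Pi.sub_apply, Pi.smul_apply, Pi.single_eq_same, smul_eq_mul, mul_one] at h2
        intro h3
        rw [h3, sub_self] at h2
        exact hc h2.symm
      · funext j
        by_cases hj : j = i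
        · subst hj; simp
        · have h2 := congrFun hi j
          simp only [Pi.sub_apply, Pi.smul_apply, Pi.single_eq_of_ne hj, smul_eq_mul,
            mul_zero, smul_zero] at h2
          rw [Function.update_of_ne hj]
          have : w j - u j = 0 := h2
          linear_combination this
    · right
      refine ⟨c, hc, ?_⟩
      funext i
      have h2 := congrFun h1 i
      simp only [Pi.sub_apply, Pi.smul_apply, smul_eq_mul, mul_one] at h2
      linear_combination h2
  · rintro (⟨j, hne, hw⟩ | ⟨c, hc, hw⟩)
    · refine ⟨w j - u j, sub_ne_zero.mpr hne, Or.inl ⟨j, ?_⟩⟩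
      funext i
      by_cases hi : i = j
      · subst hi; simp
      · simp only [Pi.sub_apply, Pi.smul_apply, Pi.single_eq_of_ne hi, smul_eq_mul, mul_zero,
          smul_zero]
        rw [hw, Function.update_of_ne hi]
        ring
    · refine ⟨c, hc, Or.inr ?_⟩
      funext i
      simp [hw]

lemma adj_update (u : Fin n → F) (j : Fin n) {b : F} (hb : b ≠ u j) :
    (phaseRotationGraph F n hn).Adj u (Function.update u j b) := by
  rw [adj_iff]
  exact Or.inl ⟨j, by simp [hb], by simp⟩

lemma adj_translate (u : Fin n → F) {c : F} (hc : c ≠ 0) :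
    (phaseRotationGraph F n hn).Adj u (fun i => u i + c) :=
  (adj_iff hn u _).mpr (Or.inr ⟨c, hc, rfl⟩)

end Adj

section Infra

set_option linter.unusedSectionVars false

variable {F : Type*} [Field F] [Fintype F] {n : ℕ}

/-- multiplicity of value `c` among coordinates of `v` -/
noncomputable def mm (c : F) (v : Fin n → F) : ℕ := (univ.filter fun j => v j = c).card

noncomputable def gg (c : F) (v : Fin n → F) : ℕ :=
  (if c = 0 then 0 else 1) + (n - mm c v)

noncomputable def DD (v : Fin n → F) : ℕ :=
  (univ : Finset F).inf' univ_nonempty (fun c => gg c v)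

lemma mm_le (c : F) (v : Fin n → F) : mm c v ≤ n := by
  classical
  calc (univ.filter fun j => v j = c).card ≤ (univ : Finset (Fin n)).card :=
        card_filter_le _ _
    _ = n := by simp

lemma gg0_eq (v : Fin n → F) : gg 0 v = n - mm 0 v := by simp [gg]

lemma gg_ne_eq {c : F} (hc : c ≠ 0) (v : Fin n → F) : gg c v = 1 + (n - mm c v) := by
  simp [gg, hc]

lemma DD_le (c : F) (v : Fin n → F) : DD v ≤ gg c v := inf'_le _ (mem_univ c)

lemma le_DD {k : ℕ} {v : Fin n → F} (h : ∀ c, k ≤ gg c v) : k ≤ DD v :=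
  Finset.le_inf' _ _ (fun c _ => h c)

lemma nonzero_count (v : Fin n → F) :
    (univ.filter fun j => v j ≠ 0).card = n - mm 0 v := by
  classical
  have := Finset.card_filter_add_card_filter_not (s := (univ : Finset (Fin n)))
    (p := fun j => v j = 0)
  simp only [card_univ, Fintype.card_fin] at this
  have h := mm_le (0 : F) v
  unfold mm at *
  simp only [ne_eq]
  omega

/-- exact change of multiplicity under update -/
lemma mm_update (v : Fin n → F) (j : Fin n) (b c : F) :
    mm c (Function.update v j b) =
      mm c v + (if b = c then 1 else 0) - (if v j = c then 1 else 0) := by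
  classical
  unfold mm
  have hsplit : ∀ (w : Fin n → F),
      (univ.filter fun i => w i = c).card
        = ((univ.filter fun i => w i = c).erase j).card + (if w j = c then 1 else 0) := by
    intro w
    by_cases h : w j = c
    · rw [Finset.card_erase_of_mem (by simp [h])]
      have : 1 ≤ (univ.filter fun i => w i = c).card :=
        Finset.card_pos.mpr ⟨j, by simp [h]⟩
      rw [if_pos h]
      omega
    · rw [Finset.erase_eq_of_notMem (by simp [h]), if_neg h]
      omega
  have herase : ((univ.filter fun i => Function.update v j b i = c).erase j)
      = ((univ.filter fun i => v i = c).erase j) := by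
    ext i
    simp only [Finset.mem_erase, Finset.mem_filter, Finset.mem_univ, true_and]
    constructor
    · rintro ⟨hij, h⟩; rw [Function.update_of_ne hij] at h; exact ⟨hij, h⟩
    · rintro ⟨hij, h⟩; rw [Function.update_of_ne hij]; exact ⟨hij, h⟩
  have h1 := hsplit (Function.update v j b)
  have h2 := hsplit v
  rw [herase] at h1
  rw [Function.update_self] at h1
  omega

lemma mm_update_le (v : Fin n → F) (j : Fin n) (b c : F) :
    mm c (Function.update v j b) ≤ mm c v + 1 := by
  rw [mm_update]; split <;> split <;> omega

lemma mm_update_le_of_ne (v : Fin n → F) (j : Fin n) {b c : F} (h : b ≠ c) :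
    mm c (Function.update v j b) ≤ mm c v := by
  rw [mm_update, if_neg h]; split <;> omega

lemma mm_translate (c d : F) (v : Fin n → F) :
    mm c (fun i => v i + d) = mm (c - d) v := by
  unfold mm
  congr 1
  ext i
  simp only [Finset.mem_filter, Finset.mem_univ, true_and]
  constructor
  · intro h; rw [← h]; ring
  · intro h; rw [h]; ring

end Infra


section Dist

set_option linter.unusedSectionVars false

variable {F : Type*} [Field F] [Fintype F] {n : ℕ} (hn : 1 ≤ n)

lemma DD_step {u v : Fin n → F}
    (h : (∃ j : Fin n, v = Function.update u j (v j)) ∨ (∃ c : F, c ≠ 0 ∧ v = fun i => u i + c)) :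
    DD v ≤ DD u + 1 := by
  obtain ⟨c₀, -, hc₀⟩ := Finset.exists_mem_eq_inf' (univ_nonempty) (fun c => gg c u)
  have hC : DD u = gg c₀ u := hc₀
  rcases h with ⟨j, hv⟩ | ⟨c, hc, hv⟩
  · have h1 : mm c₀ u ≤ mm c₀ v + 1 := by
      have : u = Function.update v j (u j) := by
        funext i
        by_cases hi : i = j
        · subst hi; simp
        · rw [Function.update_of_ne hi, hv, Function.update_of_ne hi]
      calc mm c₀ u = mm c₀ (Function.update v j (u j)) := by rw [← this]
        _ ≤ mm c₀ v + 1 := mm_update_le _ _ _ _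
    have h2 : gg c₀ v ≤ gg c₀ u + 1 := by
      have := mm_le c₀ u
      have := mm_le c₀ v
      unfold gg
      split <;> omega
    calc DD v ≤ gg c₀ v := DD_le _ _
      _ ≤ gg c₀ u + 1 := h2
      _ = DD u + 1 := by rw [hC]
  · subst hv
    by_cases h0 : c₀ = 0
    · subst h0
      have h1 : mm c (fun i => u i + c) = mm 0 u := by
        rw [mm_translate]; congr 1; ring
      calc DD _ ≤ gg c (fun i => u i + c) := DD_le _ _
        _ ≤ gg 0 u + 1 := by rw [gg_ne_eq hc, gg0_eq, h1]; omega
        _ = DD u + 1 := by rw [hC]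
    · by_cases h1 : c₀ + c = 0
      · have h2 : mm 0 (fun i => u i + c) = mm c₀ u := by
          rw [mm_translate]; congr 1; linear_combination -h1
        calc DD _ ≤ gg 0 (fun i => u i + c) := DD_le _ _
          _ ≤ gg c₀ u + 1 := by rw [gg0_eq, gg_ne_eq h0, h2]; omega
          _ = DD u + 1 := by rw [hC]
      · have h2 : mm (c₀ + c) (fun i => u i + c) = mm c₀ u := by
          rw [mm_translate]; congr 1; ring
        calc DD _ ≤ gg (c₀ + c) (fun i => u i + c) := DD_le _ _
          _ ≤ gg c₀ u + 1 := by rw [gg_ne_eq h1, gg_ne_eq h0, h2]; omega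
          _ = DD u + 1 := by rw [hC]

lemma DD_adj {u v : Fin n → F} (h : (phaseRotationGraph F n hn).Adj u v) :
    DD v ≤ DD u + 1 := by
  rw [adj_iff] at h
  apply DD_step
  rcases h with ⟨j, -, hv⟩ | ⟨c, hc, hv⟩
  · exact Or.inl ⟨j, hv⟩
  · exact Or.inr ⟨c, hc, hv⟩

lemma DD_le_walk_length' {u w : Fin n → F} (p : (phaseRotationGraph F n hn).Walk u w) :
    DD u ≤ DD w + p.length := by
  induction p with
  | nil => simp
  | cons h p ih =>
      have h1 := DD_adj hn h.symm
      simp only [SimpleGraph.Walk.length_cons]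
      omega

lemma DD_zero : DD (0 : Fin n → F) = 0 := by
  have h : mm (0 : F) (0 : Fin n → F) = n := by
    unfold mm
    simp
  have := DD_le (0 : F) (0 : Fin n → F)
  rw [gg0_eq, h] at this
  omega

lemma DD_le_walk_length {v : Fin n → F} (p : (phaseRotationGraph F n hn).Walk v 0) :
    DD v ≤ p.length := by
  have := DD_le_walk_length' hn p
  rw [DD_zero] at this
  omega

lemma exists_walk_DD : ∀ (k : ℕ) (v : Fin n → F), DD v ≤ k →
    ∃ p : (phaseRotationGraph F n hn).Walk v 0, p.length ≤ DD v := by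
  intro k
  induction k with
  | zero =>
      intro v hv
      have h0 : DD v = 0 := Nat.le_zero.mp hv
      obtain ⟨c₀, -, hc₀⟩ := Finset.exists_mem_eq_inf' (univ_nonempty) (fun c => gg c v)
      have hC : DD v = gg c₀ v := hc₀
      have hg : gg c₀ v = 0 := by omega
      have hc0 : c₀ = 0 := by
        by_contra h
        rw [gg_ne_eq h] at hg; omega
      subst hc0
      rw [gg0_eq] at hg
      have hm := mm_le (0 : F) v
      have hmn : mm (0 : F) v = n := by omega
      have hv0 : v = 0 := by
        funext j
        by_contra hj
        have hne : (univ.filter fun i => v i = (0:F)) ≠ univ := by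
          intro h
          have hj' : j ∈ univ.filter fun i => v i = (0:F) := by
            rw [h]; exact mem_univ j
          exact hj (Finset.mem_filter.mp hj').2
        have := Finset.card_lt_card (Finset.ssubset_univ_iff.mpr hne)
        unfold mm at hmn
        simp only [Finset.card_univ, Fintype.card_fin] at this
        omega
      subst hv0
      exact ⟨SimpleGraph.Walk.nil, by simp [DD_zero]⟩
  | succ k ih =>
      intro v hv
      by_cases hle : DD v ≤ k
      · exact ih v hle
      have hDD : DD v = k + 1 := by omega
      obtain ⟨c₀, -, hc₀⟩ := Finset.exists_mem_eq_inf' (univ_nonempty) (fun c => gg c v)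
      have hC : DD v = gg c₀ v := hc₀
      have hg : gg c₀ v = k + 1 := by omega
      by_cases hc0 : c₀ = 0
      · -- zero out a nonzero coordinate
        subst hc0
        rw [gg0_eq] at hg
        have hmlt : mm (0:F) v < n := by omega
        have hex : ∃ j, v j ≠ 0 := by
          by_contra h
          push_neg at h
          have : mm (0:F) v = n := by
            unfold mm
            rw [Finset.filter_true_of_mem (fun j _ => h j)]
            simp
          omega
        obtain ⟨j, hj⟩ := hex
        set w := Function.update v j 0 with hw
        have hadj : (phaseRotationGraph F n hn).Adj v w := adj_update hn v j (Ne.symm hj)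
        have hmw : mm (0:F) w = mm (0:F) v + 1 := by
          rw [hw, mm_update, if_pos rfl, if_neg hj]
          omega
        have hDw : DD w ≤ k := by
          calc DD w ≤ gg 0 w := DD_le _ _
            _ ≤ k := by rw [gg0_eq, hmw]; omega
        obtain ⟨p, hp⟩ := ih w hDw
        exact ⟨SimpleGraph.Walk.cons hadj p, by simp; omega⟩
      · rw [gg_ne_eq hc0] at hg
        by_cases hex : ∃ j, v j ≠ c₀
        · obtain ⟨j, hj⟩ := hex
          have hmv : mm c₀ v < n := by
            have hne : (univ.filter fun i => v i = c₀) ≠ univ := by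
              intro h
              have hj' : j ∈ univ.filter fun i => v i = c₀ := by
                rw [h]; exact mem_univ j
              exact hj (Finset.mem_filter.mp hj').2
            have := Finset.card_lt_card (Finset.ssubset_univ_iff.mpr hne)
            unfold mm
            simpa using this
          set w := Function.update v j c₀ with hw
          have hadj : (phaseRotationGraph F n hn).Adj v w := adj_update hn v j (Ne.symm hj)
          have hmw : mm c₀ w = mm c₀ v + 1 := by
            rw [hw, mm_update, if_pos rfl, if_neg hj]
            omega
          have hDw : DD w ≤ k := by
            calc DD w ≤ gg c₀ w := DD_le _ _
              _ ≤ k := by rw [gg_ne_eq hc0, hmw]; omega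
          obtain ⟨p, hp⟩ := ih w hDw
          exact ⟨SimpleGraph.Walk.cons hadj p, by simp; omega⟩
        · push_neg at hex
          have hadj : (phaseRotationGraph F n hn).Adj v 0 := by
            refine ⟨-c₀, neg_ne_zero.mpr hc0, Or.inr ?_⟩
            funext i
            simp [hex i]
          exact ⟨SimpleGraph.Walk.cons hadj SimpleGraph.Walk.nil, by simp; omega⟩

lemma dist_eq_DD (v : Fin n → F) : (phaseRotationGraph F n hn).dist v 0 = DD v := by
  obtain ⟨p, hp⟩ := exists_walk_DD hn (DD v) v le_rfl
  have h1 : (phaseRotationGraph F n hn).dist v 0 ≤ DD v :=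
    le_trans (SimpleGraph.dist_le p) hp
  have hreach : (phaseRotationGraph F n hn).Reachable v 0 := ⟨p⟩
  obtain ⟨q, hq⟩ := hreach.exists_walk_length_eq_dist
  have h2 : DD v ≤ (phaseRotationGraph F n hn).dist v 0 := by
    rw [← hq]
    exact DD_le_walk_length hn q
  omega

end Dist

section Vecs

set_option linter.unusedSectionVars false

variable {F : Type*} [Field F] [Fintype F] {n : ℕ}

noncomputable def xv (n r : ℕ) (a : F) : Fin n → F :=
  fun j => if (j : ℕ) < r - 1 then 1 else if (j : ℕ) = r - 1 then a else 0

noncomputable def yv (F : Type*) [Field F] (n r : ℕ) : Fin n → F :=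
  fun j => if (j : ℕ) < r then 1 else 0

lemma card_val_lt (t : ℕ) (ht : t ≤ n) :
    ((univ : Finset (Fin n)).filter fun j : Fin n => (j : ℕ) < t).card = t := by
  rw [← Finset.card_range t]
  apply Finset.card_bij (fun (j : Fin n) _ => (j : ℕ))
  · intro a ha
    simpa using (Finset.mem_filter.mp ha).2
  · intro a ha b hb h
    exact Fin.val_injective h
  · intro b hb
    refine ⟨⟨b, lt_of_lt_of_le (Finset.mem_range.mp hb) ht⟩, ?_, rfl⟩
    simp [Finset.mem_range.mp hb]

lemma card_val_not_lt (t : ℕ) (ht : t ≤ n) :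
    ((univ : Finset (Fin n)).filter fun j : Fin n => ¬ (j : ℕ) < t).card = n - t := by
  have h := Finset.card_filter_add_card_filter_not
    (s := (univ : Finset (Fin n))) (p := fun j => (j : ℕ) < t)
  rw [card_val_lt t ht] at h
  simp only [card_univ, Fintype.card_fin] at h
  omega

lemma card_val_eq (t : ℕ) (ht : t < n) :
    ((univ : Finset (Fin n)).filter fun j : Fin n => (j : ℕ) = t).card = 1 := by
  have : ((univ : Finset (Fin n)).filter fun j : Fin n => (j : ℕ) = t)
      = {(⟨t, ht⟩ : Fin n)} := by
    ext j
    simp [Fin.ext_iff]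
  rw [this, Finset.card_singleton]

variable {r : ℕ} {a : F}

lemma mm_x_one (hr1 : 1 ≤ r) (hrn : r ≤ n) (ha1 : a ≠ 1) :
    mm 1 (xv n r a) = r - 1 := by
  unfold mm xv
  rw [Finset.filter_congr (q := fun j : Fin n => (j : ℕ) < r - 1) ?_]
  · exact card_val_lt (r - 1) (by omega)
  · intro j _
    by_cases h1 : (j : ℕ) < r - 1
    · simp [h1]
    · by_cases h2 : (j : ℕ) = r - 1
      · simp [h1, h2, ha1]
      · simp [h1, h2]

lemma mm_x_a (hr1 : 1 ≤ r) (hrn : r ≤ n) (ha0 : a ≠ 0) (ha1 : a ≠ 1) :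
    mm a (xv n r a) = 1 := by
  unfold mm xv
  rw [Finset.filter_congr (q := fun j : Fin n => (j : ℕ) = r - 1) ?_]
  · exact card_val_eq (r - 1) (by omega)
  · intro j _
    by_cases h1 : (j : ℕ) < r - 1
    · simp only [if_pos h1]
      constructor
      · intro h; exact absurd h.symm ha1
      · intro h; omega
    · by_cases h2 : (j : ℕ) = r - 1
      · simp [h1, h2]
      · simp [h1, h2, Ne.symm ha0]

lemma mm_x_zero (hr1 : 1 ≤ r) (hrn : r ≤ n) (ha0 : a ≠ 0) :
    mm 0 (xv n r a) = n - r := by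
  unfold mm xv
  rw [Finset.filter_congr (q := fun j : Fin n => ¬ (j : ℕ) < r) ?_]
  · exact card_val_not_lt r hrn
  · intro j _
    by_cases h1 : (j : ℕ) < r - 1
    · simp only [if_pos h1]
      constructor
      · intro h; exact absurd h one_ne_zero
      · intro h; omega
    · by_cases h2 : (j : ℕ) = r - 1
      · simp only [if_neg h1, if_pos h2]
        constructor
        · intro h; exact absurd h ha0
        · intro h; omega
      · simp only [if_neg h1, if_neg h2]
        constructor
        · intro _; omega
        · intro _; trivial

lemma mm_x_other {c : F} (hc0 : c ≠ 0) (hc1 : c ≠ 1) (hca : c ≠ a) :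
    mm c (xv n r a) = 0 := by
  unfold mm xv
  rw [Finset.card_eq_zero]
  apply Finset.filter_false_of_mem
  intro j _
  by_cases h1 : (j : ℕ) < r - 1
  · simp only [if_pos h1]; exact Ne.symm hc1
  · by_cases h2 : (j : ℕ) = r - 1
    · simp only [if_neg h1, if_pos h2]; exact Ne.symm hca
    · simp only [if_neg h1, if_neg h2]; exact Ne.symm hc0

lemma mm_x_le {c : F} (hr2 : 2 ≤ r) (hrn : r ≤ n) (ha0 : a ≠ 0) (ha1 : a ≠ 1)
    (hc : c ≠ 0) : mm c (xv n r a) ≤ r - 1 := by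
  by_cases h1 : c = 1
  · subst h1; rw [mm_x_one (by omega) hrn ha1]
  · by_cases h2 : c = a
    · subst h2; rw [mm_x_a (by omega) hrn ha0 ha1]; omega
    · rw [mm_x_other hc h1 h2]; omega

lemma mm_y_one (hrn : r ≤ n) : mm 1 (yv F n r) = r := by
  unfold mm yv
  rw [Finset.filter_congr (q := fun j : Fin n => (j : ℕ) < r) ?_]
  · exact card_val_lt r hrn
  · intro j _
    by_cases h1 : (j : ℕ) < r
    · simp [h1]
    · simp [h1]

lemma mm_y_zero (hrn : r ≤ n) : mm 0 (yv F n r) = n - r := by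
  unfold mm yv
  rw [Finset.filter_congr (q := fun j : Fin n => ¬ (j : ℕ) < r) ?_]
  · exact card_val_not_lt r hrn
  · intro j _
    by_cases h1 : (j : ℕ) < r
    · simp [h1]
    · simp [h1]

lemma mm_y_other {c : F} (hc0 : c ≠ 0) (hc1 : c ≠ 1) : mm c (yv F n r) = 0 := by
  unfold mm yv
  rw [Finset.card_eq_zero]
  apply Finset.filter_false_of_mem
  intro j _
  by_cases h1 : (j : ℕ) < r
  · simp only [if_pos h1]; exact Ne.symm hc1
  · simp only [if_neg h1]; exact Ne.symm hc0

lemma mm_y_le {c : F} (hrn : r ≤ n) (hc : c ≠ 0) : mm c (yv F n r) ≤ r := by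
  by_cases h1 : c = 1
  · subst h1; rw [mm_y_one hrn]
  · rw [mm_y_other hc h1]; omega

lemma mm_y_le_all (hrn : r ≤ n) (hnr : n ≤ 2 * r) (c : F) : mm c (yv F n r) ≤ r := by
  by_cases h0 : c = 0
  · subst h0; rw [mm_y_zero hrn]; omega
  · exact mm_y_le hrn h0

end Vecs

section DDvals

set_option linter.unusedSectionVars false

variable {F : Type*} [Field F] [Fintype F] {n r : ℕ} {a : F}

lemma DD_x (hr2 : 2 ≤ r) (hrn : r ≤ n) (h2r : 2 * r ≤ n + 1)
    (ha0 : a ≠ 0) (ha1 : a ≠ 1) : DD (xv n r a) = r := by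
  have hub : DD (xv n r a) ≤ r := by
    have := DD_le (0 : F) (xv n r a)
    rw [gg0_eq, mm_x_zero (by omega) hrn ha0] at this
    omega
  have hlb : r ≤ DD (xv n r a) := by
    apply le_DD
    intro c
    by_cases hc : c = 0
    · subst hc
      rw [gg0_eq, mm_x_zero (by omega) hrn ha0]
      omega
    · have h1 := mm_x_le (a := a) hr2 hrn ha0 ha1 hc
      rw [gg_ne_eq hc]
      omega
  omega

lemma DD_y (hr2 : 2 ≤ r) (hrn : r ≤ n) (h2r : 2 * r ≤ n + 1) :
    DD (yv F n r) = r := by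
  have hub : DD (yv F n r) ≤ r := by
    have := DD_le (0 : F) (yv F n r)
    rw [gg0_eq, mm_y_zero hrn] at this
    omega
  have hlb : r ≤ DD (yv F n r) := by
    apply le_DD
    intro c
    by_cases hc : c = 0
    · subst hc
      rw [gg0_eq, mm_y_zero hrn]
      omega
    · have h1 := mm_y_le (F := F) hrn hc
      rw [gg_ne_eq hc]
      omega
  omega

/-- zeroing one of the first r coordinates of y gives distance r - 1 -/
lemma DD_y_update0 (hr2 : 2 ≤ r) (hrn : r ≤ n) (h2r : 2 * r ≤ n + 1)
    {j : Fin n} (hj : (j : ℕ) < r) :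
    DD (Function.update (yv F n r) j 0) = r - 1 := by
  have hyj : yv F n r j = 1 := by unfold yv; rw [if_pos hj]
  have hm0 : mm 0 (Function.update (yv F n r) j 0) = n - r + 1 := by
    rw [mm_update, if_pos rfl, if_neg (by rw [hyj]; exact one_ne_zero),
      mm_y_zero hrn]
    omega
  have hub : DD (Function.update (yv F n r) j 0) ≤ r - 1 := by
    have := DD_le (0 : F) (Function.update (yv F n r) j 0)
    rw [gg0_eq, hm0] at this
    omega
  have hlb : r - 1 ≤ DD (Function.update (yv F n r) j 0) := by
    apply le_DD
    intro c
    by_cases hc : c = 0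
    · subst hc; rw [gg0_eq, hm0]; omega
    · have h1 : mm c (Function.update (yv F n r) j 0) ≤ mm c (yv F n r) :=
        mm_update_le_of_ne _ _ (Ne.symm hc)
      have h2 := mm_y_le (F := F) hrn hc
      rw [gg_ne_eq hc]
      omega
  omega

/-- the all-(-1) translate of y has distance n - r -/
lemma DD_y_translate (hr2 : 2 ≤ r) (hrn : r ≤ n) (h2r : 2 * r ≤ n + 1) (hnr : n ≤ 2 * r) :
    DD (fun i => yv F n r i + (-1)) = n - r := by
  have hm0 : mm 0 (fun i => yv F n r i + (-1)) = r := by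
    rw [mm_translate]
    have : (0 : F) - (-1) = 1 := by ring
    rw [this, mm_y_one hrn]
  have hub : DD (fun i => yv F n r i + (-1)) ≤ n - r := by
    have := DD_le (0 : F) (fun i => yv F n r i + (-1))
    rw [gg0_eq, hm0] at this
    omega
  have hlb : n - r ≤ DD (fun i => yv F n r i + (-1)) := by
    apply le_DD
    intro c
    by_cases hc : c = 0
    · subst hc; rw [gg0_eq, hm0]
    · have h1 : mm c (fun i => yv F n r i + (-1)) ≤ r := by
        rw [mm_translate]
        exact mm_y_le_all hrn hnr _
      rw [gg_ne_eq hc]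
      omega
  omega

/-- changing one of the first r coordinates of y to b ∉ {0,1} gives distance r when n = 2r -/
lemma DD_y_updateb (hr2 : 2 ≤ r) (hn2 : n = 2 * r)
    {j : Fin n} (hj : (j : ℕ) < r) {b : F} (hb0 : b ≠ 0) (hb1 : b ≠ 1) :
    DD (Function.update (yv F n r) j b) = r := by
  have hrn : r ≤ n := by omega
  have hm0 : mm 0 (Function.update (yv F n r) j b) = n - r := by
    have hyj : yv F n r j = 1 := by unfold yv; rw [if_pos hj]
    rw [mm_update, if_neg hb0, if_neg (by rw [hyj]; exact one_ne_zero), mm_y_zero hrn]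
    omega
  have hub : DD (Function.update (yv F n r) j b) ≤ r := by
    have := DD_le (0 : F) (Function.update (yv F n r) j b)
    rw [gg0_eq, hm0] at this
    omega
  have hlb : r ≤ DD (Function.update (yv F n r) j b) := by
    apply le_DD
    intro c
    by_cases hc : c = 0
    · subst hc; rw [gg0_eq, hm0]; omega
    · have h1 : mm c (Function.update (yv F n r) j b) ≤ mm c (yv F n r) + 1 :=
        mm_update_le _ _ _ _
      have h2 := mm_y_le (F := F) hrn hc
      rw [gg_ne_eq hc]
      omega
  omega

end DDvals

section Classify

set_option linter.unusedSectionVars false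
set_option linter.unusedVariables false

variable {F : Type*} [Field F] [Fintype F] {n r : ℕ} {a : F} (hn : 1 ≤ n)

lemma mm_x_le_all (hr2 : 2 ≤ r) (hrn : r ≤ n) (h2r : 2 * r ≤ n + 1)
    (hnr : n ≤ 2 * r) (ha0 : a ≠ 0) (ha1 : a ≠ 1) (c : F) :
    mm c (xv n r a) ≤ n - r := by
  by_cases h0 : c = 0
  · subst h0; rw [mm_x_zero (by omega) hrn ha0]
  · have := mm_x_le (a := a) hr2 hrn ha0 ha1 h0
    omega

/-- classification of neighbors of x at potential r - 1 (n odd case) -/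
lemma class_x_odd (hr2 : 2 ≤ r) (hrn : r ≤ n) (h2r : 2 * r ≤ n + 1) (hnr : n ≤ 2 * r)
    (ha0 : a ≠ 0) (ha1 : a ≠ 1) {w : Fin n → F}
    (hadj : (phaseRotationGraph F n hn).Adj (xv n r a) w) (hD : DD w = r - 1) :
    ∃ j : Fin n, xv n r a j ≠ 0 ∧ w = Function.update (xv n r a) j 0 := by
  rw [adj_iff] at hadj
  rcases hadj with ⟨j, hne, hw⟩ | ⟨cc, hcc, hw⟩
  · by_cases hb : w j = 0
    · refine ⟨j, ?_, ?_⟩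
      · rw [hb] at hne; exact Ne.symm hne
      · rw [← hb]; exact hw
    · exfalso
      have hge : r ≤ DD w := by
        apply le_DD
        intro c
        by_cases hc : c = 0
        · subst hc
          have h1 : mm 0 w ≤ mm 0 (xv n r a) := by
            rw [hw]; exact mm_update_le_of_ne _ _ hb
          rw [mm_x_zero (by omega) hrn ha0] at h1
          rw [gg0_eq]
          omega
        · have h1 : mm c w ≤ mm c (xv n r a) + 1 := by
            rw [hw]; exact mm_update_le _ _ _ _
          have h2 := mm_x_le (a := a) hr2 hrn ha0 ha1 hc
          rw [gg_ne_eq hc]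
          omega
      omega
  · exfalso
    have hge : r ≤ DD w := by
      apply le_DD
      intro c
      by_cases hc : c = 0
      · subst hc
        have h1 : mm 0 w ≤ r - 1 := by
          rw [hw, mm_translate]
          exact mm_x_le (a := a) hr2 hrn ha0 ha1 (by
            intro h
            apply hcc
            linear_combination -h)
        rw [gg0_eq]
        omega
      · have h1 : mm c w ≤ n - r := by
          rw [hw, mm_translate]
          exact mm_x_le_all hr2 hrn h2r hnr ha0 ha1 _
        rw [gg_ne_eq hc]
        omega
    omega

/-- classification of neighbors of x at potential r (n even case) -/
lemma class_x_even (hr2 : 2 ≤ r) (hn2 : n = 2 * r)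
    (ha0 : a ≠ 0) (ha1 : a ≠ 1) {w : Fin n → F}
    (hadj : (phaseRotationGraph F n hn).Adj (xv n r a) w) (hD : DD w = r) :
    ∃ j : Fin n, xv n r a j ≠ 0 ∧ w j ≠ 0 ∧ w = Function.update (xv n r a) j (w j) := by
  have hrn : r ≤ n := by omega
  rw [adj_iff] at hadj
  rcases hadj with ⟨j, hne, hw⟩ | ⟨cc, hcc, hw⟩
  · by_cases hb : w j = 0
    · -- then x j ≠ 0 and DD w = r - 1, contradiction
      exfalso
      have hxj : xv n r a j ≠ 0 := by rw [hb] at hne; exact Ne.symm hne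
      have hm0 : mm 0 w = n - r + 1 := by
        rw [hw, hb, mm_update, if_pos rfl, if_neg hxj, mm_x_zero (by omega) hrn ha0]
        omega
      have := DD_le (0 : F) w
      rw [gg0_eq, hm0] at this
      omega
    · by_cases hxj : xv n r a j = 0
      · -- increasing support beyond r: DD w = r + 1, contradiction
        exfalso
        have hge : r + 1 ≤ DD w := by
          apply le_DD
          intro c
          by_cases hc : c = 0
          · subst hc
            have hm0 : mm 0 w = n - r - 1 := by
              rw [hw, mm_update, if_neg hb, if_pos hxj, mm_x_zero (by omega) hrn ha0]
              omega
            rw [gg0_eq, hm0]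
            omega
          · have h1 : mm c w ≤ mm c (xv n r a) + 1 := by
              rw [hw]; exact mm_update_le _ _ _ _
            have h2 := mm_x_le (a := a) hr2 hrn ha0 ha1 hc
            rw [gg_ne_eq hc]
            omega
        omega
      · exact ⟨j, hxj, hb, hw⟩
  · exfalso
    have hge : r + 1 ≤ DD w := by
      apply le_DD
      intro c
      by_cases hc : c = 0
      · subst hc
        have h1 : mm 0 w ≤ r - 1 := by
          rw [hw, mm_translate]
          exact mm_x_le (a := a) hr2 hrn ha0 ha1 (by
            intro h
            apply hcc
            linear_combination -h)
        rw [gg0_eq]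
        omega
      · have h1 : mm c w ≤ n - r := by
          rw [hw, mm_translate]
          exact mm_x_le_all hr2 hrn (by omega) (by omega) ha0 ha1 _
        rw [gg_ne_eq hc]
        omega
    omega

end Classify

section Counting

set_option linter.unusedSectionVars false
set_option linter.unusedVariables false

variable {F : Type*} [Field F] [Fintype F] {n r : ℕ} {a : F} (hn : 1 ≤ n)

lemma count_cx_le (hr2 : 2 ≤ r) (hrn : r ≤ n) (h2r : 2 * r ≤ n + 1) (hnr : n ≤ 2 * r)
    (ha0 : a ≠ 0) (ha1 : a ≠ 1) :
    Nat.card {w : Fin n → F | (phaseRotationGraph F n hn).Adj (xv n r a) w ∧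
      (phaseRotationGraph F n hn).dist w 0 = r - 1} ≤ r := by
  classical
  set S : Set (Fin n → F) := {w | (phaseRotationGraph F n hn).Adj (xv n r a) w ∧
      (phaseRotationGraph F n hn).dist w 0 = r - 1} with hS
  set T : Finset (Fin n → F) :=
    (univ.filter fun j : Fin n => xv n r a j ≠ 0).image
      (fun j => Function.update (xv n r a) j 0) with hT
  have hsub : S ⊆ ↑T := by
    rintro w ⟨hadj, hdist⟩
    rw [dist_eq_DD hn] at hdist
    obtain ⟨j, hj, hw⟩ := class_x_odd hn hr2 hrn h2r hnr ha0 ha1 hadj hdist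
    simp only [hT, Finset.coe_image, Set.mem_image, Finset.mem_coe, Finset.mem_filter,
      Finset.coe_filter, Set.mem_setOf_eq]
    exact ⟨j, ⟨Finset.mem_univ j, hj⟩, hw.symm⟩
  have h1 : Nat.card S = S.ncard := Nat.card_coe_set_eq S
  have h2 : S.ncard ≤ (↑T : Set (Fin n → F)).ncard :=
    Set.ncard_le_ncard hsub (Set.toFinite _)
  have h3 : (↑T : Set (Fin n → F)).ncard = T.card := Set.ncard_coe_finset T
  have h4 : T.card ≤ (univ.filter fun j : Fin n => xv n r a j ≠ 0).card :=
    Finset.card_image_le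
  have h5 : (univ.filter fun j : Fin n => xv n r a j ≠ 0).card = r := by
    rw [nonzero_count, mm_x_zero (by omega) hrn ha0]
    omega
  omega

lemma count_cy_ge (hr2 : 2 ≤ r) (hrn : r ≤ n) (hodd : n + 1 = 2 * r) :
    r + 1 ≤ Nat.card {w : Fin n → F | (phaseRotationGraph F n hn).Adj (yv F n r) w ∧
      (phaseRotationGraph F n hn).dist w 0 = r - 1} := by
  classical
  have hrn1 : r ≤ n - 1 := by omega
  set S : Set (Fin n → F) := {w | (phaseRotationGraph F n hn).Adj (yv F n r) w ∧
      (phaseRotationGraph F n hn).dist w 0 = r - 1} with hS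
  set w2 : Fin n → F := fun i => yv F n r i + (-1) with hw2
  set T : Finset (Fin n → F) :=
    ((univ.filter fun j : Fin n => (j : ℕ) < r).image
      (fun j => Function.update (yv F n r) j 0)) ∪ {w2} with hT
  have hyval : ∀ j : Fin n, (j : ℕ) < r → yv F n r j = 1 := by
    intro j hj; unfold yv; rw [if_pos hj]
  have hyval0 : ∀ j : Fin n, ¬ (j : ℕ) < r → yv F n r j = 0 := by
    intro j hj; unfold yv; rw [if_neg hj]
  -- w2 not in the image
  have hw2ni : w2 ∉ (univ.filter fun j : Fin n => (j : ℕ) < r).image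
      (fun j => Function.update (yv F n r) j 0) := by
    intro hmem
    obtain ⟨j, hj, heq⟩ := Finset.mem_image.mp hmem
    have hj' : (j : ℕ) < r := (Finset.mem_filter.mp hj).2
    set i0 : Fin n := ⟨n - 1, by omega⟩ with hi0
    have hji0 : i0 ≠ j := by
      intro h
      have : (i0 : ℕ) = (j : ℕ) := by rw [h]
      simp only [hi0] at this
      omega
    have h1 := congrFun heq i0
    rw [Function.update_of_ne hji0] at h1
    rw [hyval0 i0 (by simp only [hi0]; omega)] at h1
    have h2 : w2 i0 = -1 := by
      rw [hw2]
      simp only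
      rw [hyval0 i0 (by simp only [hi0]; omega)]
      ring
    rw [h2] at h1
    have : (1 : F) = 0 := by linear_combination h1
    exact one_ne_zero this
  have hinj : Set.InjOn (fun j => Function.update (yv F n r) j 0)
      ↑(univ.filter fun j : Fin n => (j : ℕ) < r) := by
    intro j1 hj1 j2 hj2 heq
    by_contra hne
    have hj1' : (j1 : ℕ) < r := by
      simpa using (Finset.mem_filter.mp (Finset.mem_coe.mp hj1)).2
    have heq' : Function.update (yv F n r) j1 0 = Function.update (yv F n r) j2 0 := heq
    have h1 := congrFun heq' j1
    rw [Function.update_self, Function.update_of_ne hne, hyval j1 hj1'] at h1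
    exact one_ne_zero h1.symm
  have hcard : T.card = r + 1 := by
    rw [hT, Finset.card_union_of_disjoint (by simp [hw2ni]),
      Finset.card_image_of_injOn hinj, card_val_lt r hrn, Finset.card_singleton]
  have hsub : ↑T ⊆ S := by
    intro w hw
    rw [Finset.mem_coe, hT, Finset.mem_union] at hw
    rcases hw with hw | hw
    · obtain ⟨j, hj, heq⟩ := Finset.mem_image.mp hw
      have hj' : (j : ℕ) < r := (Finset.mem_filter.mp hj).2
      subst heq
      constructor
      · exact adj_update hn _ j (by rw [hyval j hj']; exact zero_ne_one)
      · rw [dist_eq_DD hn]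
        exact DD_y_update0 hr2 hrn (by omega) hj'
    · rw [Finset.mem_singleton] at hw
      subst hw
      constructor
      · exact adj_translate hn _ (by
          intro h
          exact one_ne_zero (by linear_combination -h))
      · rw [dist_eq_DD hn, hw2]
        have := DD_y_translate (F := F) hr2 hrn (by omega) (by omega)
        rw [this]
        omega
  have h1 : Nat.card S = S.ncard := Nat.card_coe_set_eq S
  have h2 : (↑T : Set (Fin n → F)).ncard ≤ S.ncard :=
    Set.ncard_le_ncard hsub (Set.toFinite _)
  have h3 : (↑T : Set (Fin n → F)).ncard = T.card := Set.ncard_coe_finset T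
  omega

lemma card_filter_ne2 {u v : F} (huv : u ≠ v) :
    ((univ : Finset F).filter fun b : F => b ≠ u ∧ b ≠ v).card = Fintype.card F - 2 := by
  have h : ((univ : Finset F).filter fun b : F => b ≠ u ∧ b ≠ v) = univ \ {u, v} := by
    ext b
    simp [Finset.mem_sdiff]
  rw [h, Finset.card_sdiff_of_subset (Finset.subset_univ _), Finset.card_pair huv, Finset.card_univ]

lemma count_ax_le (hr2 : 2 ≤ r) (hn2 : n = 2 * r) (ha0 : a ≠ 0) (ha1 : a ≠ 1) :
    Nat.card {w : Fin n → F | (phaseRotationGraph F n hn).Adj (xv n r a) w ∧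
      (phaseRotationGraph F n hn).dist w 0 = r} ≤ r * (Fintype.card F - 2) := by
  classical
  have hrn : r ≤ n := by omega
  set S : Set (Fin n → F) := {w | (phaseRotationGraph F n hn).Adj (xv n r a) w ∧
      (phaseRotationGraph F n hn).dist w 0 = r} with hS
  set T : Finset (Fin n → F) :=
    (univ.filter fun j : Fin n => xv n r a j ≠ 0).biUnion
      (fun j => (univ.filter fun b : F => b ≠ 0 ∧ b ≠ xv n r a j).image
        (fun b => Function.update (xv n r a) j b)) with hT
  have hsub : S ⊆ ↑T := by
    rintro w ⟨hadj, hdist⟩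
    rw [dist_eq_DD hn] at hdist
    obtain ⟨j, hxj, hwj, hw⟩ := class_x_even hn hr2 hn2 ha0 ha1 hadj hdist
    have hne : w j ≠ xv n r a j := by
      intro h
      rw [h, Function.update_eq_self] at hw
      rw [hw] at hadj
      exact (phaseRotationGraph F n hn).irrefl hadj
    rw [Finset.mem_coe, hT, Finset.mem_biUnion]
    refine ⟨j, Finset.mem_filter.mpr ⟨Finset.mem_univ _, hxj⟩, ?_⟩
    rw [Finset.mem_image]
    exact ⟨w j, Finset.mem_filter.mpr ⟨Finset.mem_univ _, hwj, hne⟩, hw.symm⟩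
  have hTcard : T.card ≤ r * (Fintype.card F - 2) := by
    calc T.card ≤ ∑ j ∈ (univ.filter fun j : Fin n => xv n r a j ≠ 0),
        ((univ.filter fun b : F => b ≠ 0 ∧ b ≠ xv n r a j).image
          (fun b => Function.update (xv n r a) j b)).card := Finset.card_biUnion_le
      _ ≤ ∑ j ∈ (univ.filter fun j : Fin n => xv n r a j ≠ 0), (Fintype.card F - 2) := by
          apply Finset.sum_le_sum
          intro j hj
          calc ((univ.filter fun b : F => b ≠ 0 ∧ b ≠ xv n r a j).image
              (fun b => Function.update (xv n r a) j b)).card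
              ≤ (univ.filter fun b : F => b ≠ 0 ∧ b ≠ xv n r a j).card :=
                Finset.card_image_le
            _ = Fintype.card F - 2 :=
                card_filter_ne2 (Ne.symm (Finset.mem_filter.mp hj).2)
      _ = (univ.filter fun j : Fin n => xv n r a j ≠ 0).card * (Fintype.card F - 2) := by
          rw [Finset.sum_const, smul_eq_mul]
      _ = r * (Fintype.card F - 2) := by
          rw [nonzero_count, mm_x_zero (by omega) hrn ha0]
          congr 1
          omega
  have h1 : Nat.card S = S.ncard := Nat.card_coe_set_eq S
  have h2 : S.ncard ≤ (↑T : Set (Fin n → F)).ncard :=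
    Set.ncard_le_ncard hsub (Set.toFinite _)
  have h3 : (↑T : Set (Fin n → F)).ncard = T.card := Set.ncard_coe_finset T
  omega

lemma count_ay_ge (hr2 : 2 ≤ r) (hn2 : n = 2 * r) :
    r * (Fintype.card F - 2) + 1 ≤
      Nat.card {w : Fin n → F | (phaseRotationGraph F n hn).Adj (yv F n r) w ∧
        (phaseRotationGraph F n hn).dist w 0 = r} := by
  classical
  have hrn : r ≤ n := by omega
  have hrn1 : r ≤ n - 1 := by omega
  set S : Set (Fin n → F) := {w | (phaseRotationGraph F n hn).Adj (yv F n r) w ∧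
      (phaseRotationGraph F n hn).dist w 0 = r} with hS
  set w2 : Fin n → F := fun i => yv F n r i + (-1) with hw2
  set B : Finset (Fin n → F) :=
    (univ.filter fun j : Fin n => (j : ℕ) < r).biUnion
      (fun j => (univ.filter fun b : F => b ≠ 0 ∧ b ≠ 1).image
        (fun b => Function.update (yv F n r) j b)) with hB
  set T : Finset (Fin n → F) := B ∪ {w2} with hT
  have hyval : ∀ j : Fin n, (j : ℕ) < r → yv F n r j = 1 := by
    intro j hj; unfold yv; rw [if_pos hj]
  have hyval0 : ∀ j : Fin n, ¬ (j : ℕ) < r → yv F n r j = 0 := by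
    intro j hj; unfold yv; rw [if_neg hj]
  have hw2ni : w2 ∉ B := by
    intro hmem
    rw [hB, Finset.mem_biUnion] at hmem
    obtain ⟨j, hj, hmem2⟩ := hmem
    obtain ⟨b, hb, heq⟩ := Finset.mem_image.mp hmem2
    have hj' : (j : ℕ) < r := (Finset.mem_filter.mp hj).2
    set i0 : Fin n := ⟨n - 1, by omega⟩ with hi0
    have hji0 : i0 ≠ j := by
      intro h
      have : (i0 : ℕ) = (j : ℕ) := by rw [h]
      simp only [hi0] at this
      omega
    have h1 := congrFun heq i0
    rw [Function.update_of_ne hji0] at h1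
    rw [hyval0 i0 (by simp only [hi0]; omega)] at h1
    have h2 : w2 i0 = -1 := by
      rw [hw2]
      simp only
      rw [hyval0 i0 (by simp only [hi0]; omega)]
      ring
    rw [h2] at h1
    exact one_ne_zero (by linear_combination h1)
  have hBcard : B.card = r * (Fintype.card F - 2) := by
    rw [hB, Finset.card_biUnion]
    · have heach : ∀ j ∈ (univ.filter fun j : Fin n => (j : ℕ) < r),
          ((univ.filter fun b : F => b ≠ 0 ∧ b ≠ 1).image
            (fun b => Function.update (yv F n r) j b)).card = Fintype.card F - 2 := by
        intro j hj
        rw [Finset.card_image_of_injOn, card_filter_ne2 (zero_ne_one (α := F))]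
        intro b1 hb1 b2 hb2 heq
        have heq' : Function.update (yv F n r) j b1 = Function.update (yv F n r) j b2 := heq
        have := congrFun heq' j
        rwa [Function.update_self, Function.update_self] at this
      rw [Finset.sum_congr rfl heach, Finset.sum_const, smul_eq_mul, card_val_lt r hrn]
    · intro j1 hj1 j2 hj2 hne
      simp only [Finset.disjoint_left]
      intro w hw1 hw2'
      obtain ⟨b1, hb1, heq1⟩ := Finset.mem_image.mp hw1
      obtain ⟨b2, hb2, heq2⟩ := Finset.mem_image.mp hw2'
      have hb1' := Finset.mem_filter.mp hb1
      have hj1' : (j1 : ℕ) < r := by simpa using (Finset.mem_filter.mp hj1).2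
      have h1 := congrFun heq1 j1
      have h2 := congrFun heq2 j1
      rw [Function.update_self] at h1
      rw [Function.update_of_ne (by exact fun h => hne (h ▸ rfl))] at h2
      rw [hyval j1 hj1'] at h2
      rw [← h2] at h1
      exact hb1'.2.2 h1
  have hcard : T.card = r * (Fintype.card F - 2) + 1 := by
    rw [hT, Finset.card_union_of_disjoint (by simp [hw2ni]), hBcard, Finset.card_singleton]
  have hsub : ↑T ⊆ S := by
    intro w hw
    rw [Finset.mem_coe, hT, Finset.mem_union] at hw
    rcases hw with hw | hw
    · rw [hB, Finset.mem_biUnion] at hw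
      obtain ⟨j, hj, hmem2⟩ := hw
      obtain ⟨b, hb, heq⟩ := Finset.mem_image.mp hmem2
      have hj' : (j : ℕ) < r := (Finset.mem_filter.mp hj).2
      have hb' := Finset.mem_filter.mp hb
      subst heq
      constructor
      · exact adj_update hn _ j (by rw [hyval j hj']; exact hb'.2.2)
      · rw [dist_eq_DD hn]
        exact DD_y_updateb hr2 hn2 hj' hb'.2.1 hb'.2.2
    · rw [Finset.mem_singleton] at hw
      subst hw
      constructor
      · exact adj_translate hn _ (by
          intro h
          exact one_ne_zero (by linear_combination -h))
      · rw [dist_eq_DD hn, hw2]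
        have := DD_y_translate (F := F) hr2 hrn (by omega) (by omega)
        rw [this]
        omega
  have h1 : Nat.card S = S.ncard := Nat.card_coe_set_eq S
  have h2 : (↑T : Set (Fin n → F)).ncard ≤ S.ncard :=
    Set.ncard_le_ncard hsub (Set.toFinite _)
  have h3 : (↑T : Set (Fin n → F)).ncard = T.card := Set.ncard_coe_finset T
  omega

end Counting


open scoped Classical in
/-- For n ≥ 3 and q ≥ 3, the phase-rotation graph is not distance-regular:
with r = ⌈n/2⌉, the vertex x (with r-1 ones, then a ∉ {0,1}, then zeros) and
the vertex y (with r ones, then zeros) are both at distance r from 0, yet the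
intersection numbers c_r differ when n is odd and a_r differ when n is even. -/
theorem phaseRotationGraph_not_distanceRegular {F : Type*} [Field F] [Fintype F]
    {n : ℕ} (hn : 3 ≤ n) (hq : 3 ≤ Fintype.card F)
    (a : F) (ha0 : a ≠ 0) (ha1 : a ≠ 1) :
    let G := phaseRotationGraph F n (by omega)
    let r := (n + 1) / 2
    let x : Fin n → F := fun j =>
      if (j : ℕ) < r - 1 then 1 else if (j : ℕ) = r - 1 then a else 0
    let y : Fin n → F := fun j => if (j : ℕ) < r then 1 else 0
    let c := fun (u v : Fin n → F) (i : ℕ) =>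
      Nat.card {w : Fin n → F | G.Adj u w ∧ G.dist w v = i - 1}
    let A := fun (u v : Fin n → F) (i : ℕ) =>
      Nat.card {w : Fin n → F | G.Adj u w ∧ G.dist w v = i}
    G.dist x 0 = r ∧ G.dist y 0 = r ∧
    (n % 2 = 1 → c x 0 r ≠ c y 0 r) ∧
    (n % 2 = 0 → A x 0 r ≠ A y 0 r) := by
  intro G r x y c A
  have hn1 : 1 ≤ n := by omega
  have hrdef : r = (n + 1) / 2 := rfl
  have hr2 : 2 ≤ r := by omega
  have hrn : r ≤ n := by omega
  have h2r : 2 * r ≤ n + 1 := by omega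
  have hnr : n ≤ 2 * r := by omega
  have hdx : (phaseRotationGraph F n hn1).dist (xv n r a) 0 = r := by
    rw [dist_eq_DD hn1]
    exact DD_x hr2 hrn h2r ha0 ha1
  have hdy : (phaseRotationGraph F n hn1).dist (yv F n r) 0 = r := by
    rw [dist_eq_DD hn1]
    exact DD_y hr2 hrn h2r
  refine ⟨hdx, hdy, ?_, ?_⟩
  · intro hpar
    have hodd : n + 1 = 2 * r := by omega
    have hcx := count_cx_le (F := F) (n := n) (r := r) (a := a) hn1 hr2 hrn h2r hnr ha0 ha1
    have hcy := count_cy_ge (F := F) (n := n) (r := r) hn1 hr2 hrn hodd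
    intro heq
    have heq' : Nat.card {w : Fin n → F | (phaseRotationGraph F n hn1).Adj (xv n r a) w ∧
          (phaseRotationGraph F n hn1).dist w 0 = r - 1}
        = Nat.card {w : Fin n → F | (phaseRotationGraph F n hn1).Adj (yv F n r) w ∧
          (phaseRotationGraph F n hn1).dist w 0 = r - 1} := heq
    omega
  · intro hpar
    have heven : n = 2 * r := by omega
    have hax := count_ax_le (F := F) (n := n) (r := r) (a := a) hn1 hr2 heven ha0 ha1
    have hay := count_ay_ge (F := F) (n := n) (r := r) hn1 hr2 heven
    intro heq
    have heq' : Nat.card {w : Fin n → F | (phaseRotationGraph F n hn1).Adj (xv n r a) w ∧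
          (phaseRotationGraph F n hn1).dist w 0 = r}
        = Nat.card {w : Fin n → F | (phaseRotationGraph F n hn1).Adj (yv F n r) w ∧
          (phaseRotationGraph F n hn1).dist w 0 = r} := heq
    set K := r * (Fintype.card F - 2) with hK
    omega
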